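/- Fix T > 0 and constants C ≥ c > 0. Suppose (S₁, F₁, I₁) and (S₂, F₂, I₂) are two solutions of the deterministic ε-system on [0,T] with the same initial data S₁(0,·) = S₂(0,·) and I₁(0,·) = I₂(0,·), and suppose both solutions satisfy, for all (t,x): 0 ≤ S_i(t,x) ≤ C, S_i(t,x) + I_i(t,x) ≥ c, and 0 ≤ F_i(t,x) ≤ λ*C. Then (S₁, F₁, I₁) = (S₂, F₂, I₂) on [0,T] × D_ε. -/

import Mathlib

open MeasureTheory Set

abbrev Grid (d n : ℕ) := Fin d → ZMod n

/-- Discrete Laplacian on the grid of mesh `ε = 1/n` (the factor `(n:ℝ)^2` is `ε⁻²`). -/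
noncomputable def discLap (d n : ℕ) (f : Grid d n → ℝ) (x : Grid d n) : ℝ :=
  (n : ℝ) ^ 2 * ∑ i : Fin d,
    (f (Function.update x i (x i + 1)) - 2 * f x + f (Function.update x i (x i - 1)))

/-- Matrix of the discrete Laplacian. -/
noncomputable def lapMat (d n : ℕ) [NeZero n] : Matrix (Grid d n) (Grid d n) ℝ :=
  Matrix.of fun x y => discLap d n (fun z => if z = y then 1 else 0) x

/-- `heatKer d n ν s t y x = (e^{(t-s) ν Δ_ε})_{y,x}`. -/
noncomputable def heatKer (d n : ℕ) [NeZero n] (ν s t : ℝ) (y x : Grid d n) : ℝ :=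
  NormedSpace.exp ((t - s) • ν • lapMat d n) y x

/-- The half-open cube of side `1/n` based at grid point `x`, as a subset of `ℝ^d`. -/
noncomputable def cell (d n : ℕ) (x : Grid d n) : Set (Fin d → ℝ) :=
  Set.univ.pi fun i => Set.Ico (((x i).val : ℝ) / n) ((((x i).val : ℝ) + 1) / n)

/-- Cell average `ε^{-d} ∫_{V_ε(x)} f(y) dy`. -/
noncomputable def cellAvg (d n : ℕ) (f : (Fin d → ℝ) → ℝ) (x : Grid d n) : ℝ :=
  (n : ℝ) ^ d * ∫ y in cell d n x, f y

/-- The force of infection `Γ(t,x) = B(t,x)^{-γ} Σ_y β_ε^{x,y}(t) F(t,y)`. -/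
noncomputable def gam (d n : ℕ) [NeZero n] (γ : ℝ) (βe : ℝ → Grid d n → Grid d n → ℝ)
    (S I F : ℝ → Grid d n → ℝ) (t : ℝ) (x : Grid d n) : ℝ :=
  (S t x + I t x) ^ (-γ) * ∑ y, βe t x y * F t y

/-- `(S,F,I)` solves the deterministic `ε`-system on `[0,T]`. -/
noncomputable def IsSolution (d n : ℕ) [NeZero n] (νS νI γ : ℝ) (lam lam0 : ℝ → ℝ)
    (βe : ℝ → Grid d n → Grid d n → ℝ) (T : ℝ) (S F I : ℝ → Grid d n → ℝ) : Prop :=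
  (∀ x, ContinuousOn (fun t => S t x) (Icc 0 T)) ∧
  (∀ x, ContinuousOn (fun t => F t x) (Icc 0 T)) ∧
  (∀ x, ContinuousOn (fun t => I t x) (Icc 0 T)) ∧
  (∀ t ∈ Icc (0:ℝ) T, ∀ x,
    S t x = S 0 x - (∫ s in (0:ℝ)..t, S s x * gam d n γ βe S I F s x)
      + νS * ∫ s in (0:ℝ)..t, discLap d n (S s) x) ∧
  (∀ t ∈ Icc (0:ℝ) T, ∀ x,
    F t x = lam0 t * (∑ y, I 0 y * heatKer d n νI 0 t y x)
      + ∑ y, ∫ s in (0:ℝ)..t,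
          lam (t - s) * (S s y * gam d n γ βe S I F s y) * heatKer d n νI s t y x) ∧
  (∀ t ∈ Icc (0:ℝ) T, ∀ x,
    I t x = I 0 x + (∫ s in (0:ℝ)..t, S s x * gam d n γ βe S I F s x)
      + νI * ∫ s in (0:ℝ)..t, discLap d n (I s) x)

/-!
The proof is a Grönwall argument for
`φ t = ‖S₁ t - S₂ t‖ + ‖F₁ t - F₂ t‖ + ‖I₁ t - I₂ t‖` (sup norms over the grid).
On the region `0 ≤ S ≤ C`, `S + I ≥ c`, `0 ≤ F ≤ λ* C` the incidence `S Γ` is Lipschitz in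
`(S, F, I)`, since `B ↦ B ^ (-γ)` is Lipschitz on `[c, ∞)`; on the finite grid the discrete
Laplacian is a bounded operator, and the heat kernel `e^{(t - s) ν_I Δ_ε}` is bounded for
`s, t ∈ [0, T]`. Subtracting the integral equations of the two solutions therefore gives
`φ t ≤ K ∫₀ᵗ φ`, whence `φ = 0`.
-/

section Estimates

open Finset

theorem eq_zero_of_le_mul_integral {φ : ℝ → ℝ} {K T : ℝ} (hT : 0 ≤ T)
    (hφ : ContinuousOn φ (Icc 0 T)) (hφ0 : ∀ t ∈ Icc 0 T, 0 ≤ φ t)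
    (h : ∀ t ∈ Icc 0 T, φ t ≤ K * ∫ s in (0:ℝ)..t, φ s) :
    ∀ t ∈ Icc 0 T, φ t = 0 := by
  -- Extending `φ` continuously to `ℝ` makes `t ↦ ∫₀ᵗ φ` differentiable up to the endpoints.
  set ψ : ℝ → ℝ := fun s => φ (projIcc 0 T hT s)
  have hψ : Continuous ψ := hφ.comp_continuous
    (continuous_subtype_val.comp continuous_projIcc) fun s => (projIcc 0 T hT s).2
  have hψφ : ∀ s ∈ Icc 0 T, ψ s = φ s := fun s hs => by
    rw [show ψ s = φ (projIcc 0 T hT s) from rfl, projIcc_of_mem hT hs]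
  have hint : ∀ t ∈ Icc 0 T, ∫ s in (0:ℝ)..t, ψ s = ∫ s in (0:ℝ)..t, φ s := fun t ht =>
    intervalIntegral.integral_congr fun s hs => by
      rw [uIcc_of_le ht.1] at hs
      exact hψφ s ⟨hs.1, hs.2.trans ht.2⟩
  have hint0 : ∀ t ∈ Icc 0 T, 0 ≤ ∫ s in (0:ℝ)..t, φ s := fun t ht =>
    intervalIntegral.integral_nonneg ht.1 fun s hs => hφ0 s ⟨hs.1, hs.2.trans ht.2⟩
  have hderiv (t : ℝ) : HasDerivAt (fun t => ∫ s in (0:ℝ)..t, ψ s) (ψ t) t :=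
    (hψ.integral_hasStrictDerivAt 0 t).hasDerivAt
  have hzero := eq_zero_of_abs_deriv_le_mul_abs_self_of_eq_zero_right (K := K) (a := 0) (b := T)
    (fun t _ => (hderiv t).continuousAt.continuousWithinAt)
    (fun t _ => (hderiv t).hasDerivWithinAt) (by simp) fun t ht => by
      have ht' : t ∈ Icc 0 T := Ico_subset_Icc_self ht
      rw [Real.norm_eq_abs, Real.norm_eq_abs, hψφ t ht', hint t ht', abs_of_nonneg (hφ0 t ht'),
        abs_of_nonneg (hint0 t ht')]
      exact h t ht'
  intro t ht
  refine le_antisymm ?_ (hφ0 t ht)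
  simpa [← hint t ht, hzero t ht] using h t ht

theorem abs_integral_le_mul_integral {f φ : ℝ → ℝ} {K t : ℝ} (ht : 0 ≤ t)
    (hφ : IntervalIntegrable φ volume 0 t) (hf : ∀ s ∈ Icc 0 t, |f s| ≤ K * φ s) :
    |∫ s in (0:ℝ)..t, f s| ≤ K * ∫ s in (0:ℝ)..t, φ s := by
  rw [← intervalIntegral.integral_const_mul]
  exact intervalIntegral.norm_integral_le_of_norm_le (f := f) ht
    (ae_of_all _ fun s hs => hf s (Ioc_subset_Icc_self hs)) (hφ.const_mul K)

theorem MeasureTheory.IntegrableOn.intervalIntegrable_of_mem_Icc {f : ℝ → ℝ} {T t : ℝ}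
    (hf : IntegrableOn f (Icc 0 T)) (ht : t ∈ Icc 0 T) : IntervalIntegrable f volume 0 t :=
  (hf.mono_set (by rw [uIcc_of_le ht.1]; exact Icc_subset_Icc_right ht.2)).intervalIntegrable

theorem abs_rpow_neg_le {b c γ : ℝ} (hc : 0 < c) (hγ : 0 ≤ γ) (hb : c ≤ b) :
    |b ^ (-γ)| ≤ c ^ (-γ) := by
  rw [abs_of_nonneg (Real.rpow_nonneg (hc.le.trans hb) _)]
  exact Real.rpow_le_rpow_of_nonpos hc hb (neg_nonpos.mpr hγ)

theorem abs_rpow_neg_sub_rpow_neg_le {a b c γ : ℝ} (hc : 0 < c) (hγ : 0 ≤ γ)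
    (ha : c ≤ a) (hb : c ≤ b) : |a ^ (-γ) - b ^ (-γ)| ≤ γ * c ^ (-γ - 1) * |a - b| := by
  have hder : ∀ x ∈ Ici c, HasDerivWithinAt (fun y : ℝ => y ^ (-γ))
      (-γ * x ^ (-γ - 1)) (Ici c) x := fun x hx =>
    (Real.hasDerivAt_rpow_const (Or.inl (hc.trans_le hx).ne')).hasDerivWithinAt
  have hbound : ∀ x ∈ Ici c, ‖-γ * x ^ (-γ - 1)‖ ≤ γ * c ^ (-γ - 1) := fun x hx => by
    rw [Real.norm_eq_abs, abs_mul, abs_neg, abs_of_nonneg hγ,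
      abs_of_nonneg (Real.rpow_nonneg (hc.trans_le hx).le _)]
    exact mul_le_mul_of_nonneg_left (Real.rpow_le_rpow_of_nonpos hc hx (by linarith)) hγ
  simpa using (convex_Ici c).norm_image_sub_le_of_norm_hasDerivWithin_le hder hbound hb ha

theorem abs_mul_mul_sub_mul_mul_le {a₁ a₂ b₁ b₂ e₁ e₂ A B E : ℝ} (ha₂ : |a₂| ≤ A)
    (hb₁ : |b₁| ≤ B) (hb₂ : |b₂| ≤ B) (he₁ : |e₁| ≤ E) :
    |a₁ * (b₁ * e₁) - a₂ * (b₂ * e₂)|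
      ≤ B * E * |a₁ - a₂| + A * E * |b₁ - b₂| + A * B * |e₁ - e₂| := by
  have hB : 0 ≤ B := (abs_nonneg _).trans hb₁
  have hA : 0 ≤ A := (abs_nonneg _).trans ha₂
  rw [show a₁ * (b₁ * e₁) - a₂ * (b₂ * e₂)
      = (a₁ - a₂) * (b₁ * e₁) + a₂ * ((b₁ - b₂) * e₁) + a₂ * (b₂ * (e₁ - e₂)) by ring]
  refine (abs_add_three _ _ _).trans (add_le_add_three ?_ ?_ ?_) <;> simp only [abs_mul]
  · nlinarith [abs_nonneg (a₁ - a₂), mul_le_mul hb₁ he₁ (abs_nonneg _) hB]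
  · nlinarith [abs_nonneg (b₁ - b₂), abs_nonneg e₁, mul_le_mul ha₂ he₁ (abs_nonneg _) hA]
  · nlinarith [abs_nonneg (e₁ - e₂), abs_nonneg b₂, mul_le_mul ha₂ hb₂ (abs_nonneg _) hA]

theorem abs_sum_mul_le {ι : Type*} [Fintype ι] {w f : ι → ℝ} {B Λ : ℝ} (hw : ∀ i, 0 ≤ w i)
    (hB : ∑ i, w i ≤ B) (hΛ : 0 ≤ Λ) (hf : ∀ i, |f i| ≤ Λ) : |∑ i, w i * f i| ≤ B * Λ :=
  calc |∑ i, w i * f i| ≤ ∑ i, w i * Λ := (abs_sum_le_sum_abs _ _).trans <|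
        sum_le_sum fun i _ => by
          rw [abs_mul, abs_of_nonneg (hw i)]
          exact mul_le_mul_of_nonneg_left (hf i) (hw i)
    _ ≤ B * Λ := by rw [← sum_mul]; gcongr

theorem abs_sum_integral_mul_sub_le {ι : Type*} [Fintype ι] {t Λ K M : ℝ} (ht : 0 ≤ t)
    {p φ : ℝ → ℝ} {q a₁ a₂ : ℝ → ι → ℝ}
    (hp : AEStronglyMeasurable p (volume.restrict (Icc 0 t))) (hpb : ∀ s ∈ Icc 0 t, |p s| ≤ Λ)
    (hq : ∀ i, AEStronglyMeasurable (fun s => q s i) (volume.restrict (Icc 0 t)))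
    (hqb : ∀ s ∈ Icc 0 t, ∀ i, |q s i| ≤ M)
    (ha₁ : ∀ i, IntegrableOn (fun s => a₁ s i) (Icc 0 t))
    (ha₂ : ∀ i, IntegrableOn (fun s => a₂ s i) (Icc 0 t))
    (hφ : IntervalIntegrable φ volume 0 t) (ha : ∀ s ∈ Icc 0 t, ∀ i, |a₁ s i - a₂ s i| ≤ K * φ s) :
    |(∑ i, ∫ s in (0:ℝ)..t, p s * a₁ s i * q s i) - ∑ i, ∫ s in (0:ℝ)..t, p s * a₂ s i * q s i|
      ≤ Fintype.card ι * (Λ * K * M) * ∫ s in (0:ℝ)..t, φ s := by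
  have hint (a : ℝ → ι → ℝ) (ha : ∀ i, IntegrableOn (fun s => a s i) (Icc 0 t)) (i : ι) :
      IntervalIntegrable (fun s => p s * a s i * q s i) volume 0 t := by
    refine IntegrableOn.intervalIntegrable ?_
    rw [uIcc_of_le ht]
    exact ((ha i).bdd_mul hp (ae_restrict_of_forall_mem measurableSet_Icc hpb)).mul_bdd (hq i)
      (ae_restrict_of_forall_mem measurableSet_Icc fun s hs => hqb s hs i)
  calc _ ≤ ∑ i, |(∫ s in (0:ℝ)..t, p s * a₁ s i * q s i)
          - ∫ s in (0:ℝ)..t, p s * a₂ s i * q s i| := by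
        rw [← sum_sub_distrib]
        exact abs_sum_le_sum_abs _ _
    _ ≤ ∑ _i : ι, Λ * K * M * ∫ s in (0:ℝ)..t, φ s := sum_le_sum fun i _ => by
        rw [← intervalIntegral.integral_sub (hint a₁ ha₁ i) (hint a₂ ha₂ i)]
        refine abs_integral_le_mul_integral ht hφ fun s hs => ?_
        rw [← sub_mul, ← mul_sub, abs_mul, abs_mul]
        have hΛ : 0 ≤ Λ := (abs_nonneg _).trans (hpb s hs)
        calc |p s| * |a₁ s i - a₂ s i| * |q s i| ≤ Λ * (K * φ s) * M :=
              mul_le_mul (mul_le_mul (hpb s hs) (ha s hs i) (abs_nonneg _) hΛ) (hqb s hs i)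
                (abs_nonneg _) (mul_nonneg hΛ ((abs_nonneg _).trans (ha s hs i)))
          _ = Λ * K * M * φ s := by ring
    _ = _ := by rw [sum_const, card_univ, nsmul_eq_mul, mul_assoc]; ring

end Estimates

section Grid

open Finset

variable {d n : ℕ}

theorem discLap_sub (f g : Grid d n → ℝ) (x : Grid d n) :
    discLap d n (f - g) x = discLap d n f x - discLap d n g x := by
  simp only [discLap, Pi.sub_apply, ← mul_sub, ← sum_sub_distrib]
  congr 1
  exact sum_congr rfl fun i _ => by ring

theorem continuousOn_discLap {u : ℝ → Grid d n → ℝ} {s : Set ℝ}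
    (hu : ∀ x, ContinuousOn (fun t => u t x) s) (x : Grid d n) :
    ContinuousOn (fun t => discLap d n (u t) x) s := by
  unfold discLap
  fun_prop

variable [NeZero n]

theorem abs_discLap_le (f : Grid d n → ℝ) (x : Grid d n) :
    |discLap d n f x| ≤ 4 * d * n ^ 2 * ‖f‖ := by
  have hf (z : Grid d n) : |f z| ≤ ‖f‖ := norm_le_pi_norm f z
  have hterm (i : Fin d) : |f (Function.update x i (x i + 1)) - 2 * f x
      + f (Function.update x i (x i - 1))| ≤ 4 * ‖f‖ := by
    have h₁ := abs_le.mp (hf (Function.update x i (x i + 1)))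
    have h₂ := abs_le.mp (hf (Function.update x i (x i - 1)))
    have h₃ := abs_le.mp (hf x)
    exact abs_le.mpr ⟨by linarith, by linarith⟩
  calc |discLap d n f x|
      ≤ n ^ 2 * ∑ _i : Fin d, 4 * ‖f‖ := by
        rw [discLap, abs_mul, abs_of_nonneg (by positivity)]
        gcongr
        exact (abs_sum_le_sum_abs _ _).trans (sum_le_sum fun i _ => hterm i)
    _ = 4 * d * n ^ 2 * ‖f‖ := by
        simp only [sum_const, card_univ, Fintype.card_fin, nsmul_eq_mul]; ring

theorem continuous_heatKer (ν : ℝ) :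
    Continuous fun p : ℝ × ℝ => (heatKer d n ν p.1 p.2 : Grid d n → Grid d n → ℝ) := by
  -- Matrices carry no global norm; the ℓ∞ operator norm induces the usual (product) topology.
  let _ : NormedRing (Matrix (Grid d n) (Grid d n) ℝ) := Matrix.linftyOpNormedRing
  let _ : NormedAlgebra ℝ (Matrix (Grid d n) (Grid d n) ℝ) := Matrix.linftyOpNormedAlgebra
  let _ : NormedAlgebra ℚ (Matrix (Grid d n) (Grid d n) ℝ) := NormedAlgebra.restrictScalars ℚ ℝ _
  exact NormedSpace.exp_continuous.comp
    ((continuous_snd.sub continuous_fst).smul (continuous_const (y := ν • lapMat d n)))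

theorem exists_abs_heatKer_le (ν T : ℝ) : ∃ M, ∀ s ∈ Icc 0 T, ∀ t ∈ Icc 0 T, ∀ y x : Grid d n,
    |heatKer d n ν s t y x| ≤ M := by
  obtain ⟨M, hM⟩ := (isCompact_Icc.prod isCompact_Icc).exists_bound_of_continuousOn
    (continuous_heatKer (d := d) (n := n) ν).continuousOn
  exact ⟨M, fun s hs t ht y x => (norm_le_pi_norm _ x).trans <|
    (norm_le_pi_norm _ y).trans (hM (s, t) ⟨hs, ht⟩)⟩

end Grid

section Model

open Finset

variable {d n : ℕ} [NeZero n]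

noncomputable def incidence (d n : ℕ) [NeZero n] (γ : ℝ) (βe : ℝ → Grid d n → Grid d n → ℝ)
    (S I F : ℝ → Grid d n → ℝ) (t : ℝ) (x : Grid d n) : ℝ :=
  S t x * gam d n γ βe S I F t x

def IsConfined (c C Λ : ℝ) (S F I : Grid d n → ℝ) : Prop :=
  ∀ x, S x ∈ Icc 0 C ∧ c ≤ S x + I x ∧ F x ∈ Icc 0 Λ

variable {γ c C Λ βStar t T : ℝ} {βe : ℝ → Grid d n → Grid d n → ℝ} {S F I : ℝ → Grid d n → ℝ}

theorem IsConfined.abs_factors_le (h : IsConfined c C Λ (S t) (F t) (I t)) (hc : 0 < c)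
    (hγ : 0 ≤ γ) (x : Grid d n) (hβ0 : ∀ y, 0 ≤ βe t x y) (hβsum : ∑ y, βe t x y ≤ βStar) :
    |S t x| ≤ C ∧ |(S t x + I t x) ^ (-γ)| ≤ c ^ (-γ) ∧ |∑ y, βe t x y * F t y| ≤ βStar * Λ :=
  ⟨(abs_of_nonneg (h x).1.1).trans_le (h x).1.2, abs_rpow_neg_le hc hγ (h x).2.1,
    abs_sum_mul_le hβ0 hβsum ((h x).2.2.1.trans (h x).2.2.2)
      fun y => (abs_of_nonneg (h y).2.2.1).trans_le (h y).2.2.2⟩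

theorem abs_incidence_le (h : IsConfined c C Λ (S t) (F t) (I t)) (hc : 0 < c) (hγ : 0 ≤ γ)
    (x : Grid d n) (hβ0 : ∀ y, 0 ≤ βe t x y) (hβsum : ∑ y, βe t x y ≤ βStar) :
    |incidence d n γ βe S I F t x| ≤ C * (c ^ (-γ) * (βStar * Λ)) := by
  obtain ⟨hS, hb, he⟩ := h.abs_factors_le hc hγ x hβ0 hβsum
  rw [incidence, gam, abs_mul, abs_mul]
  exact mul_le_mul hS (mul_le_mul hb he (abs_nonneg _) ((abs_nonneg _).trans hb))
    (by positivity) ((abs_nonneg _).trans hS)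

theorem abs_incidence_sub_le {S₁ F₁ I₁ S₂ F₂ I₂ : ℝ → Grid d n → ℝ}
    (h₁ : IsConfined c C Λ (S₁ t) (F₁ t) (I₁ t)) (h₂ : IsConfined c C Λ (S₂ t) (F₂ t) (I₂ t))
    (hc : 0 < c) (hγ : 0 ≤ γ) (x : Grid d n) (hβ0 : ∀ y, 0 ≤ βe t x y)
    (hβsum : ∑ y, βe t x y ≤ βStar) :
    |incidence d n γ βe S₁ I₁ F₁ t x - incidence d n γ βe S₂ I₂ F₂ t x|
      ≤ (c ^ (-γ) * (βStar * Λ) + C * (βStar * Λ) * (γ * c ^ (-γ - 1))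
          + C * c ^ (-γ) * βStar) * (‖S₁ t - S₂ t‖ + ‖F₁ t - F₂ t‖ + ‖I₁ t - I₂ t‖) := by
  set φ := ‖S₁ t - S₂ t‖ + ‖F₁ t - F₂ t‖ + ‖I₁ t - I₂ t‖
  obtain ⟨-, hb₁, he₁⟩ := h₁.abs_factors_le hc hγ x hβ0 hβsum
  obtain ⟨hS₂, hb₂, -⟩ := h₂.abs_factors_le hc hγ x hβ0 hβsum
  have hS : |S₁ t x - S₂ t x| ≤ ‖S₁ t - S₂ t‖ := norm_le_pi_norm (S₁ t - S₂ t) x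
  have hF (y : Grid d n) : |F₁ t y - F₂ t y| ≤ ‖F₁ t - F₂ t‖ := norm_le_pi_norm (F₁ t - F₂ t) y
  have hI : |I₁ t x - I₂ t x| ≤ ‖I₁ t - I₂ t‖ := norm_le_pi_norm (I₁ t - I₂ t) x
  have hb : |(S₁ t x + I₁ t x) ^ (-γ) - (S₂ t x + I₂ t x) ^ (-γ)| ≤ γ * c ^ (-γ - 1) * φ := by
    refine (abs_rpow_neg_sub_rpow_neg_le hc hγ (h₁ x).2.1 (h₂ x).2.1).trans ?_
    have : |S₁ t x + I₁ t x - (S₂ t x + I₂ t x)| ≤ φ := by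
      rw [add_sub_add_comm]
      exact (abs_add_le _ _).trans (by linarith [norm_nonneg (F₁ t - F₂ t)])
    exact mul_le_mul_of_nonneg_left this (by positivity)
  have he : |∑ y, βe t x y * F₁ t y - ∑ y, βe t x y * F₂ t y| ≤ βStar * φ := by
    rw [← sum_sub_distrib]
    simp only [← mul_sub]
    refine abs_sum_mul_le hβ0 hβsum (by positivity) fun y => (hF y).trans ?_
    linarith [norm_nonneg (S₁ t - S₂ t), norm_nonneg (I₁ t - I₂ t)]
  have hC : 0 ≤ C := (abs_nonneg _).trans hS₂
  have hE : 0 ≤ βStar * Λ := (abs_nonneg _).trans he₁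
  calc _ ≤ c ^ (-γ) * (βStar * Λ) * |S₁ t x - S₂ t x|
        + C * (βStar * Λ) * |(S₁ t x + I₁ t x) ^ (-γ) - (S₂ t x + I₂ t x) ^ (-γ)|
        + C * c ^ (-γ) * |∑ y, βe t x y * F₁ t y - ∑ y, βe t x y * F₂ t y| :=
        abs_mul_mul_sub_mul_mul_le hS₂ hb₁ hb₂ he₁
    _ ≤ c ^ (-γ) * (βStar * Λ) * φ + C * (βStar * Λ) * (γ * c ^ (-γ - 1) * φ)
        + C * c ^ (-γ) * (βStar * φ) := by
        gcongr
        linarith [norm_nonneg (F₁ t - F₂ t), norm_nonneg (I₁ t - I₂ t)]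
    _ = _ := by ring

theorem integrableOn_incidence (hc : 0 < c) (hγ : 0 ≤ γ)
    (hβm : ∀ x y, Measurable fun t => βe t x y) (hβ0 : ∀ t x y, 0 ≤ βe t x y)
    (hβsum : ∀ t x, ∑ y, βe t x y ≤ βStar)
    (hS : ∀ x, ContinuousOn (fun t => S t x) (Icc 0 T))
    (hF : ∀ x, ContinuousOn (fun t => F t x) (Icc 0 T))
    (hI : ∀ x, ContinuousOn (fun t => I t x) (Icc 0 T))
    (hconf : ∀ t ∈ Icc 0 T, IsConfined c C Λ (S t) (F t) (I t)) (x : Grid d n) :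
    IntegrableOn (fun t => incidence d n γ βe S I F t x) (Icc 0 T) := by
  have hSm (y : Grid d n) := (hS y).aemeasurable (μ := volume) measurableSet_Icc
  have hFm (y : Grid d n) := (hF y).aemeasurable (μ := volume) measurableSet_Icc
  have hIm (y : Grid d n) := (hI y).aemeasurable (μ := volume) measurableSet_Icc
  have hβm' (y : Grid d n) := (hβm x y).aemeasurable (μ := volume.restrict (Icc 0 T))
  refine IntegrableOn.of_bound measure_Icc_lt_top ?_ (C * (c ^ (-γ) * (βStar * Λ)))
    (ae_restrict_of_forall_mem measurableSet_Icc fun t ht =>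
      abs_incidence_le (hconf t ht) hc hγ x (hβ0 t x) (hβsum t x))
  unfold incidence gam
  fun_prop

theorem IsSolution.susceptible_eq {νS νI : ℝ} {lam lam0 : ℝ → ℝ}
    (h : IsSolution d n νS νI γ lam lam0 βe T S F I) :
    ∀ t ∈ Icc 0 T, ∀ x, S t x = S 0 x + (∫ s in (0:ℝ)..t, -incidence d n γ βe S I F s x)
      + νS * ∫ s in (0:ℝ)..t, discLap d n (S s) x := fun t ht x => by
  rw [intervalIntegral.integral_neg, ← sub_eq_add_neg]
  exact h.2.2.2.1 t ht x

end Model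

section Stability

variable {d n : ℕ} [NeZero n] {K T : ℝ} {φ : ℝ → ℝ}

theorem exists_norm_sub_le_of_reactionDiffusion {ν : ℝ} {u₁ u₂ a₁ a₂ : ℝ → Grid d n → ℝ}
    (hu₁ : ∀ t ∈ Icc 0 T, ∀ x, u₁ t x = u₁ 0 x + (∫ s in (0:ℝ)..t, a₁ s x)
      + ν * ∫ s in (0:ℝ)..t, discLap d n (u₁ s) x)
    (hu₂ : ∀ t ∈ Icc 0 T, ∀ x, u₂ t x = u₂ 0 x + (∫ s in (0:ℝ)..t, a₂ s x)
      + ν * ∫ s in (0:ℝ)..t, discLap d n (u₂ s) x)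
    (h0 : ∀ x, u₁ 0 x = u₂ 0 x)
    (hu₁c : ∀ x, ContinuousOn (fun t => u₁ t x) (Icc 0 T))
    (hu₂c : ∀ x, ContinuousOn (fun t => u₂ t x) (Icc 0 T))
    (ha₁ : ∀ x, IntegrableOn (fun t => a₁ t x) (Icc 0 T))
    (ha₂ : ∀ x, IntegrableOn (fun t => a₂ t x) (Icc 0 T))
    (hφ : IntegrableOn φ (Icc 0 T)) (hu : ∀ t ∈ Icc 0 T, ‖u₁ t - u₂ t‖ ≤ φ t)
    (ha : ∀ t ∈ Icc 0 T, ∀ x, |a₁ t x - a₂ t x| ≤ K * φ t) :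
    ∃ K', ∀ t ∈ Icc 0 T, ‖u₁ t - u₂ t‖ ≤ K' * ∫ s in (0:ℝ)..t, φ s := by
  refine ⟨K + |ν| * (4 * d * n ^ 2), fun t ht => (pi_norm_le_iff_of_nonempty _).mpr fun x => ?_⟩
  have hsub : Icc 0 t ⊆ Icc 0 T := Icc_subset_Icc_right ht.2
  have hΔ {u : ℝ → Grid d n → ℝ} (hu : ∀ x, ContinuousOn (fun t => u t x) (Icc 0 T)) :
      IntervalIntegrable (fun s => discLap d n (u s) x) volume 0 t :=
    (continuousOn_discLap hu x).integrableOn_Icc.intervalIntegrable_of_mem_Icc ht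
  have hφt := hφ.intervalIntegrable_of_mem_Icc ht
  have hreact : |∫ s in (0:ℝ)..t, a₁ s x - a₂ s x| ≤ K * ∫ s in (0:ℝ)..t, φ s :=
    abs_integral_le_mul_integral ht.1 hφt fun s hs => ha s (hsub hs) x
  have hdiff : |∫ s in (0:ℝ)..t, discLap d n (u₁ s) x - discLap d n (u₂ s) x|
      ≤ 4 * d * n ^ 2 * ∫ s in (0:ℝ)..t, φ s :=
    abs_integral_le_mul_integral ht.1 hφt fun s hs => by
      rw [← discLap_sub]
      exact (abs_discLap_le _ x).trans (by gcongr; exact hu s (hsub hs))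
  rw [Real.norm_eq_abs, Pi.sub_apply, hu₁ t ht x, hu₂ t ht x, h0 x,
    add_sub_add_comm, add_sub_add_left_eq_sub, ← mul_sub,
    ← intervalIntegral.integral_sub ((ha₁ x).intervalIntegrable_of_mem_Icc ht)
      ((ha₂ x).intervalIntegrable_of_mem_Icc ht),
    ← intervalIntegral.integral_sub (hΔ hu₁c) (hΔ hu₂c)]
  calc _ ≤ _ := abs_add_le _ _
    _ ≤ K * (∫ s in (0:ℝ)..t, φ s) + |ν| * (4 * d * n ^ 2 * ∫ s in (0:ℝ)..t, φ s) := by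
        rw [abs_mul]; gcongr
    _ = _ := by ring

theorem exists_norm_sub_le_of_heatDuhamel {ν lamStar : ℝ} {lam lam0 : ℝ → ℝ}
    (hlam : Measurable lam) (hlamb : ∀ t, lam t ∈ Icc 0 lamStar)
    {F₁ F₂ I₁ I₂ a₁ a₂ : ℝ → Grid d n → ℝ}
    (hF₁ : ∀ t ∈ Icc 0 T, ∀ x, F₁ t x = lam0 t * (∑ y, I₁ 0 y * heatKer d n ν 0 t y x)
      + ∑ y, ∫ s in (0:ℝ)..t, lam (t - s) * a₁ s y * heatKer d n ν s t y x)
    (hF₂ : ∀ t ∈ Icc 0 T, ∀ x, F₂ t x = lam0 t * (∑ y, I₂ 0 y * heatKer d n ν 0 t y x)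
      + ∑ y, ∫ s in (0:ℝ)..t, lam (t - s) * a₂ s y * heatKer d n ν s t y x)
    (h0 : ∀ y, I₁ 0 y = I₂ 0 y)
    (ha₁ : ∀ y, IntegrableOn (fun t => a₁ t y) (Icc 0 T))
    (ha₂ : ∀ y, IntegrableOn (fun t => a₂ t y) (Icc 0 T))
    (hφ : IntegrableOn φ (Icc 0 T)) (ha : ∀ t ∈ Icc 0 T, ∀ y, |a₁ t y - a₂ t y| ≤ K * φ t) :
    ∃ K', ∀ t ∈ Icc 0 T, ‖F₁ t - F₂ t‖ ≤ K' * ∫ s in (0:ℝ)..t, φ s := by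
  obtain ⟨M, hM⟩ := exists_abs_heatKer_le (d := d) (n := n) ν T
  refine ⟨Fintype.card (Grid d n) * (lamStar * K * M),
    fun t ht => (pi_norm_le_iff_of_nonempty _).mpr fun x => ?_⟩
  have hsub : Icc 0 t ⊆ Icc 0 T := Icc_subset_Icc_right ht.2
  rw [Real.norm_eq_abs, Pi.sub_apply, hF₁ t ht x, hF₂ t ht x]
  simp only [h0, add_sub_add_left_eq_sub]
  exact abs_sum_integral_mul_sub_le ht.1
    (hlam.comp (measurable_const.sub measurable_id)).aestronglyMeasurable
    (fun s _ => (abs_of_nonneg (hlamb _).1).trans_le (hlamb _).2)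
    (fun y => ((continuous_apply x).comp ((continuous_apply y).comp
      ((continuous_heatKer ν).comp (continuous_id.prodMk continuous_const)))).aestronglyMeasurable)
    (fun s hs y => hM s (hsub hs) t ht y x)
    (fun y => (ha₁ y).mono_set hsub) (fun y => (ha₂ y).mono_set hsub)
    (hφ.intervalIntegrable_of_mem_Icc ht) fun s hs y => ha s (hsub hs) y

end Stability

theorem uniqueness_deterministic_system_general
    (d : ℕ) (n : ℕ) [NeZero n]
    (νS νI γ lamStar βStar c C T : ℝ)
    (hγ : γ ∈ Icc (0:ℝ) 1)
    (hc : 0 < c) (hT : 0 < T)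
    (lam lam0 : ℝ → ℝ) (hlamm : Measurable lam)
    (hlamb : ∀ t, lam t ∈ Icc 0 lamStar)
    (βe : ℝ → Grid d n → Grid d n → ℝ)
    (hβm : ∀ x y, Measurable fun t => βe t x y)
    (hβ0 : ∀ t x y, 0 ≤ βe t x y)
    (hβsum : ∀ t x, ∑ y, βe t x y ≤ βStar)
    (S₁ F₁ I₁ S₂ F₂ I₂ : ℝ → Grid d n → ℝ)
    (hinitS : ∀ x, S₁ 0 x = S₂ 0 x) (hinitI : ∀ x, I₁ 0 x = I₂ 0 x)
    (hsol₁ : IsSolution d n νS νI γ lam lam0 βe T S₁ F₁ I₁)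
    (hsol₂ : IsSolution d n νS νI γ lam lam0 βe T S₂ F₂ I₂)
    (hreg₁ : ∀ t ∈ Icc (0:ℝ) T, ∀ x,
      S₁ t x ∈ Icc 0 C ∧ c ≤ S₁ t x + I₁ t x ∧ F₁ t x ∈ Icc 0 (lamStar * C))
    (hreg₂ : ∀ t ∈ Icc (0:ℝ) T, ∀ x,
      S₂ t x ∈ Icc 0 C ∧ c ≤ S₂ t x + I₂ t x ∧ F₂ t x ∈ Icc 0 (lamStar * C)) :
    ∀ t ∈ Icc (0:ℝ) T, ∀ x,
      S₁ t x = S₂ t x ∧ F₁ t x = F₂ t x ∧ I₁ t x = I₂ t x := by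
  have hS₁ := hsol₁.susceptible_eq
  have hS₂ := hsol₂.susceptible_eq
  obtain ⟨hS₁c, hF₁c, hI₁c, -, hF₁, hI₁⟩ := hsol₁
  obtain ⟨hS₂c, hF₂c, hI₂c, -, hF₂, hI₂⟩ := hsol₂
  set φ : ℝ → ℝ := fun t => ‖S₁ t - S₂ t‖ + ‖F₁ t - F₂ t‖ + ‖I₁ t - I₂ t‖
  have hφc : ContinuousOn φ (Icc 0 T) := by
    rw [← continuousOn_pi] at hS₁c hS₂c hF₁c hF₂c hI₁c hI₂c
    fun_prop
  have hinc : ∀ t ∈ Icc 0 T, ∀ x, |incidence d n γ βe S₁ I₁ F₁ t x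
      - incidence d n γ βe S₂ I₂ F₂ t x| ≤ _ * φ t := fun t ht x =>
    abs_incidence_sub_le (hreg₁ t ht) (hreg₂ t ht) hc hγ.1 x (hβ0 t x) (hβsum t x)
  have hint₁ := integrableOn_incidence hc hγ.1 hβm hβ0 hβsum hS₁c hF₁c hI₁c hreg₁
  have hint₂ := integrableOn_incidence hc hγ.1 hβm hβ0 hβsum hS₂c hF₂c hI₂c hreg₂
  obtain ⟨KS, hKS⟩ := exists_norm_sub_le_of_reactionDiffusion hS₁ hS₂ hinitS hS₁c hS₂c
    (fun x => (hint₁ x).neg) (fun x => (hint₂ x).neg) hφc.integrableOn_Icc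
    (fun t _ => by linarith [norm_nonneg (F₁ t - F₂ t), norm_nonneg (I₁ t - I₂ t)])
    fun t ht x => by rw [neg_sub_neg, abs_sub_comm]; exact hinc t ht x
  obtain ⟨KI, hKI⟩ := exists_norm_sub_le_of_reactionDiffusion hI₁ hI₂ hinitI hI₁c hI₂c
    hint₁ hint₂ hφc.integrableOn_Icc
    (fun t _ => by linarith [norm_nonneg (S₁ t - S₂ t), norm_nonneg (F₁ t - F₂ t)]) hinc
  obtain ⟨KF, hKF⟩ := exists_norm_sub_le_of_heatDuhamel hlamm hlamb hF₁ hF₂ hinitI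
    hint₁ hint₂ hφc.integrableOn_Icc hinc
  have hzero := eq_zero_of_le_mul_integral (K := KS + KF + KI) hT.le hφc
    (fun t _ => by positivity) fun t ht => by
      linarith [hKS t ht, hKF t ht, hKI t ht]
  intro t ht x
  have h := hzero t ht
  simp only [φ, add_nonneg, norm_nonneg, add_eq_zero_iff_of_nonneg, norm_sub_eq_zero_iff] at h
  exact ⟨congrFun h.1.1 x, congrFun h.1.2 x, congrFun h.2 x⟩

/-- uniqueness for the deterministic `ε`-system among solutions
staying in the region `0 ≤ S ≤ C`, `S + I ≥ c`, `0 ≤ F ≤ λ* C`. -/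
theorem uniqueness_deterministic_system
    (d : ℕ) (hd : 1 ≤ d) (n : ℕ) [NeZero n]
    (νS νI γ lamStar βStar c C T : ℝ)
    (hνS : 0 < νS) (hνI : 0 < νI) (hγ : γ ∈ Icc (0:ℝ) 1)
    (hls : 0 < lamStar) (hbs : 0 < βStar)
    (hc : 0 < c) (hcC : c ≤ C) (hT : 0 < T)
    (lam lam0 : ℝ → ℝ) (hlamm : Measurable lam) (hlam0m : Measurable lam0)
    (hlamb : ∀ t, lam t ∈ Icc 0 lamStar) (hlam0b : ∀ t, lam0 t ∈ Icc 0 lamStar)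
    (βe : ℝ → Grid d n → Grid d n → ℝ)
    (hβm : ∀ x y, Measurable fun t => βe t x y)
    (hβ0 : ∀ t x y, 0 ≤ βe t x y)
    (hβsum : ∀ t x, ∑ y, βe t x y ≤ βStar)
    (S₁ F₁ I₁ S₂ F₂ I₂ : ℝ → Grid d n → ℝ)
    (hinitS : ∀ x, S₁ 0 x = S₂ 0 x) (hinitI : ∀ x, I₁ 0 x = I₂ 0 x)
    (hsol₁ : IsSolution d n νS νI γ lam lam0 βe T S₁ F₁ I₁)
    (hsol₂ : IsSolution d n νS νI γ lam lam0 βe T S₂ F₂ I₂)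
    (hreg₁ : ∀ t ∈ Icc (0:ℝ) T, ∀ x,
      S₁ t x ∈ Icc 0 C ∧ c ≤ S₁ t x + I₁ t x ∧ F₁ t x ∈ Icc 0 (lamStar * C))
    (hreg₂ : ∀ t ∈ Icc (0:ℝ) T, ∀ x,
      S₂ t x ∈ Icc 0 C ∧ c ≤ S₂ t x + I₂ t x ∧ F₂ t x ∈ Icc 0 (lamStar * C)) :
    ∀ t ∈ Icc (0:ℝ) T, ∀ x,
      S₁ t x = S₂ t x ∧ F₁ t x = F₂ t x ∧ I₁ t x = I₂ t x :=
  uniqueness_deterministic_system_general d n νS νI γ lamStar βStar c C T hγ hc hT lam lam0 hlamm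
    hlamb βe hβm hβ0 hβsum S₁ F₁ I₁ S₂ F₂ I₂ hinitS hinitI hsol₁ hsol₂ hreg₁ hreg₂
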